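/- Let K ≥ 0 with Rician density f_K(h) = ((K+1)/π) · exp(−(K+1)·|h − √(K/(K+1))|²) on ℂ, let Q(x) = ∫_x^∞ (1/√(2π)) · exp(−u²/2) du be the Gaussian tail function, and let Δb ∈ ℂ be nonzero. Then lim_{ρ → ∞} ρ · ∫_ℂ Q(√ρ · |Δb| · |h| / √2) · f_K(h) dh = (K+1)·e^{−K}/|Δb|². In particular, the pairwise error probability associated with the non-removable singular fade states decays exactly as SNR^{−1}, with constant proportional to e^{−K}. -/

import Mathlib

open MeasureTheory Set Filter

/-- The Rician density with Rician factor `K` on `ℂ`: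
`f_K(h) = ((K+1)/π) exp(−(K+1)|h − √(K/(K+1))|²)`. -/
noncomputable def ricianDensity (K : ℝ) (h : ℂ) : ℝ :=
  ((K + 1) / Real.pi) *
    Real.exp (-(K + 1) * (‖h - (Real.sqrt (K / (K + 1)) : ℂ)‖) ^ 2)

/-- The Gaussian tail function `Q(x) = ∫_x^∞ (1/√(2π)) exp(−u²/2) du`. -/
noncomputable def gaussianQ (x : ℝ) : ℝ :=
  ∫ u in Set.Ioi x, (1 / Real.sqrt (2 * Real.pi)) * Real.exp (-u ^ 2 / 2)

/-!
Put `s = √ρ ‖Δb‖ / √2`. The dilation `h = z / s` turns `ρ ∫ Q(s‖h‖) f_K(h) dh` into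
`(2 / ‖Δb‖²) ∫ Q(‖z‖) f_K(z / s) dz`, and since `f_K` is bounded and continuous, dominated
convergence gives the limit `(2 / ‖Δb‖²) f_K(0) ∫_ℂ Q(‖z‖) dz` as `s → ∞`.
Here `f_K(0) = (K + 1) e^{−K} / π`, and in polar coordinates
`∫_ℂ Q(‖z‖) dz = 2π ∫_0^∞ t Q(t) dt = π / 2`: the function `(t² Q(t) − t φ(t) − Q(t)) / 2` is a
primitive of `t Q(t)` equal to `−1/4` at `0`, and it tends to `0` at infinity by the Mills bound
`Q(t) ≤ φ(t) / t`.
-/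

open Topology ProbabilityTheory Real

local notation "φ" => gaussianPDFReal 0 1

lemma gaussianPDFReal_zero_one (x : ℝ) : φ x = 1 / √(2 * π) * exp (-x ^ 2 / 2) := by
  simp [gaussianPDFReal]

lemma gaussianQ_eq_integral_gaussianPDFReal (x : ℝ) : gaussianQ x = ∫ u in Ioi x, φ u := by
  simp only [gaussianQ, gaussianPDFReal_zero_one]

lemma gaussianQ_nonneg (x : ℝ) : 0 ≤ gaussianQ x := by
  rw [gaussianQ_eq_integral_gaussianPDFReal]
  exact setIntegral_nonneg measurableSet_Ioi fun u _ => gaussianPDFReal_nonneg 0 1 u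

lemma gaussianQ_zero : gaussianQ 0 = 1 / 2 := by
  have h : ∀ u : ℝ, 1 / √(2 * π) * exp (-u ^ 2 / 2) = 1 / √(2 * π) * exp (-(1 / 2) * u ^ 2) :=
    fun u => by ring_nf
  rw [gaussianQ, integral_congr_ae (ae_of_all _ h), integral_const_mul, integral_gaussian_Ioi,
    show π / (1 / 2) = 2 * π by ring]
  field_simp

lemma hasDerivAt_gaussianPDFReal_zero_one (x : ℝ) : HasDerivAt φ (-x * φ x) x := by
  have h := (((hasDerivAt_pow 2 x).fun_neg.div_const 2).exp).const_mul (1 / √(2 * π))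
  rw [show φ = fun x => 1 / √(2 * π) * exp (-x ^ 2 / 2) from funext gaussianPDFReal_zero_one]
  exact h.congr_deriv (by push_cast; ring)

lemma hasDerivAt_gaussianQ (x : ℝ) : HasDerivAt gaussianQ (-φ x) x := by
  have hint := integrable_gaussianPDFReal 0 1
  have hprimitive : gaussianQ = fun y => gaussianQ 0 - ∫ u in (0 : ℝ)..y, φ u := funext fun y => by
    simp only [gaussianQ_eq_integral_gaussianPDFReal]
    rw [← intervalIntegral.integral_Ioi_sub_Ioi' hint.integrableOn hint.integrableOn]
    ring
  have hcont : Continuous φ := by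
    rw [show φ = fun x => 1 / √(2 * π) * exp (-x ^ 2 / 2) from funext gaussianPDFReal_zero_one]
    fun_prop
  rw [hprimitive]
  exact (intervalIntegral.integral_hasDerivAt_right hint.intervalIntegrable
    (hcont.stronglyMeasurableAtFilter _ _) hcont.continuousAt).const_sub _

lemma continuous_gaussianQ : Continuous gaussianQ :=
  continuous_iff_continuousAt.2 fun x => (hasDerivAt_gaussianQ x).continuousAt

lemma tendsto_pow_mul_gaussianPDFReal_atTop (n : ℕ) :
    Tendsto (fun t => t ^ n * φ t) atTop (𝓝 0) := by
  have h := ((tendsto_rpow_abs_mul_exp_neg_mul_sq_cocompact one_half_pos n).mono_left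
    atTop_le_cocompact).const_mul (1 / √(2 * π))
  rw [mul_zero] at h
  refine h.congr' ?_
  filter_upwards [eventually_ge_atTop 0] with t ht
  rw [gaussianPDFReal_zero_one, abs_of_nonneg ht, rpow_natCast]
  ring_nf

lemma tendsto_gaussianPDFReal_atTop : Tendsto φ atTop (𝓝 0) := by
  simpa using tendsto_pow_mul_gaussianPDFReal_atTop 0

lemma integrableOn_Ioi_mul_gaussianPDFReal {t : ℝ} (ht : 0 ≤ t) :
    IntegrableOn (fun u => u * φ u) (Ioi t) :=
  integrableOn_Ioi_deriv_of_nonneg' (g := fun u => -φ u)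
    (fun u _ => (hasDerivAt_gaussianPDFReal_zero_one u).neg.congr_deriv (by ring))
    (fun u hu => mul_nonneg (ht.trans hu.out.le) (gaussianPDFReal_nonneg 0 1 u))
    (by simpa using tendsto_gaussianPDFReal_atTop.neg)

lemma integral_Ioi_mul_gaussianPDFReal {t : ℝ} (ht : 0 ≤ t) :
    ∫ u in Ioi t, u * φ u = φ t := by
  rw [integral_Ioi_of_hasDerivAt_of_nonneg' (g := fun u => -φ u)
    (fun u _ => (hasDerivAt_gaussianPDFReal_zero_one u).neg.congr_deriv (by ring))
    (fun u hu => mul_nonneg (ht.trans hu.out.le) (gaussianPDFReal_nonneg 0 1 u))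
    (by simpa using tendsto_gaussianPDFReal_atTop.neg)]
  ring

lemma gaussianQ_le_gaussianPDFReal_div {t : ℝ} (ht : 0 < t) : gaussianQ t ≤ φ t / t := by
  rw [gaussianQ_eq_integral_gaussianPDFReal, le_div_iff₀ ht, ← integral_mul_const,
    ← integral_Ioi_mul_gaussianPDFReal ht.le]
  refine setIntegral_mono_on ((integrable_gaussianPDFReal 0 1).integrableOn.mul_const t)
    (integrableOn_Ioi_mul_gaussianPDFReal ht.le) measurableSet_Ioi fun u hu => ?_
  rw [mul_comm]
  exact mul_le_mul_of_nonneg_right hu.out.le (gaussianPDFReal_nonneg 0 1 u)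

lemma tendsto_sq_mul_gaussianQ_atTop : Tendsto (fun t => t ^ 2 * gaussianQ t) atTop (𝓝 0) := by
  refine tendsto_of_tendsto_of_tendsto_of_le_of_le' tendsto_const_nhds
    (tendsto_pow_mul_gaussianPDFReal_atTop 1) ?_ ?_
  · exact Eventually.of_forall fun t => mul_nonneg (sq_nonneg t) (gaussianQ_nonneg t)
  · filter_upwards [eventually_gt_atTop 0] with t ht
    calc t ^ 2 * gaussianQ t ≤ t ^ 2 * (φ t / t) :=
          mul_le_mul_of_nonneg_left (gaussianQ_le_gaussianPDFReal_div ht) (sq_nonneg t)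
      _ = t ^ 1 * φ t := by field_simp

lemma tendsto_gaussianQ_atTop : Tendsto gaussianQ atTop (𝓝 0) := by
  refine tendsto_of_tendsto_of_tendsto_of_le_of_le' tendsto_const_nhds
    tendsto_sq_mul_gaussianQ_atTop (Eventually.of_forall gaussianQ_nonneg) ?_
  filter_upwards [eventually_ge_atTop 1] with t ht
  exact le_mul_of_one_le_left (gaussianQ_nonneg t) (one_le_pow₀ ht)

lemma hasDerivAt_primitive_mul_gaussianQ (t : ℝ) :
    HasDerivAt (fun t => (t ^ 2 * gaussianQ t - t * φ t - gaussianQ t) / 2)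
      (t * gaussianQ t) t := by
  have h := ((((hasDerivAt_pow 2 t).mul (hasDerivAt_gaussianQ t)).sub
    ((hasDerivAt_id t).mul (hasDerivAt_gaussianPDFReal_zero_one t))).sub
    (hasDerivAt_gaussianQ t)).div_const 2
  exact h.congr_deriv (by simp only [id, Nat.add_one_sub_one, pow_one]; ring)

lemma tendsto_primitive_mul_gaussianQ_atTop :
    Tendsto (fun t => (t ^ 2 * gaussianQ t - t * φ t - gaussianQ t) / 2) atTop (𝓝 0) := by
  simpa using ((tendsto_sq_mul_gaussianQ_atTop.sub
    (tendsto_pow_mul_gaussianPDFReal_atTop 1)).sub tendsto_gaussianQ_atTop).div_const 2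

lemma integrableOn_Ioi_mul_gaussianQ : IntegrableOn (fun t => t * gaussianQ t) (Ioi 0) :=
  integrableOn_Ioi_deriv_of_nonneg' (fun t _ => hasDerivAt_primitive_mul_gaussianQ t)
    (fun t ht => mul_nonneg ht.out.le (gaussianQ_nonneg t)) tendsto_primitive_mul_gaussianQ_atTop

lemma integral_Ioi_mul_gaussianQ : ∫ t in Ioi 0, t * gaussianQ t = 1 / 4 := by
  rw [integral_Ioi_of_hasDerivAt_of_nonneg' (fun t _ => hasDerivAt_primitive_mul_gaussianQ t)
    (fun t ht => mul_nonneg ht.out.le (gaussianQ_nonneg t)) tendsto_primitive_mul_gaussianQ_atTop,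
    gaussianQ_zero]
  ring

lemma integrable_gaussianQ_norm : Integrable (fun z : ℂ => gaussianQ ‖z‖) := by
  rw [integrable_fun_norm_addHaar volume, Complex.finrank_real_complex]
  simpa using integrableOn_Ioi_mul_gaussianQ

lemma integral_gaussianQ_norm : ∫ z : ℂ, gaussianQ ‖z‖ = π / 2 := by
  rw [integral_fun_norm_addHaar volume, Complex.finrank_real_complex, measureReal_def,
    Complex.volume_ball]
  simp only [Nat.add_one_sub_one, pow_one, smul_eq_mul, integral_Ioi_mul_gaussianQ, nsmul_eq_mul,
    ENNReal.ofReal_one, one_pow, one_mul, ENNReal.coe_toReal, NNReal.coe_real_pi]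
  ring

section Dilation

variable {E : Type*} [NormedAddCommGroup E] [NormedSpace ℝ E] [FiniteDimensional ℝ E]
  [MeasurableSpace E] [BorelSpace E] (μ : Measure E) [μ.IsAddHaarMeasure]

lemma tendsto_pow_mul_integral_comp_smul_mul {g f : E → ℝ} (hg : Integrable g μ)
    (hf : Continuous f) {C : ℝ} (hfC : ∀ x, ‖f x‖ ≤ C) :
    Tendsto (fun s : ℝ => s ^ Module.finrank ℝ E * ∫ x, g (s • x) * f x ∂μ) atTop
      (𝓝 ((∫ x, g x ∂μ) * f 0)) := by
  have hdilate : ∀ᶠ s : ℝ in atTop,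
      ∫ y, g y * f (s⁻¹ • y) ∂μ = s ^ Module.finrank ℝ E * ∫ x, g (s • x) * f x ∂μ := by
    filter_upwards [eventually_gt_atTop 0] with s hs
    have h := μ.integral_comp_smul_of_nonneg (fun y => g y * f (s⁻¹ • y)) s (hR := hs.le)
    simp only [inv_smul_smul₀ hs.ne'] at h
    rw [h, smul_eq_mul, mul_inv_cancel_left₀ (pow_ne_zero _ hs.ne')]
  refine Tendsto.congr' hdilate ?_
  rw [← integral_mul_const]
  refine tendsto_integral_filter_of_dominated_convergence (fun y => ‖g y‖ * C)
    (Eventually.of_forall fun s => hg.aestronglyMeasurable.mul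
      (hf.comp (continuous_const_smul (s⁻¹ : ℝ))).aestronglyMeasurable)
    (Eventually.of_forall fun s => ae_of_all _ fun y => ?_) (hg.norm.mul_const C)
    (ae_of_all _ fun y => ?_)
  · rw [norm_mul]
    exact mul_le_mul_of_nonneg_left (hfC _) (norm_nonneg _)
  · have hshrink : Tendsto (fun s : ℝ => s⁻¹ • y) atTop (𝓝 0) := by
      simpa using (tendsto_inv_atTop_zero (𝕜 := ℝ)).smul_const y
    exact ((hf.tendsto 0).comp hshrink).const_mul (g y)

end Dilation

lemma continuous_ricianDensity (K : ℝ) : Continuous (ricianDensity K) := by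
  unfold ricianDensity
  fun_prop

lemma norm_ricianDensity_le {K : ℝ} (hK : 0 ≤ K + 1) (h : ℂ) :
    ‖ricianDensity K h‖ ≤ (K + 1) / π := by
  rw [ricianDensity, norm_mul, norm_of_nonneg (by positivity), norm_of_nonneg (exp_nonneg _)]
  refine mul_le_of_le_one_right (by positivity) (exp_le_one_iff.2 ?_)
  exact mul_nonpos_of_nonpos_of_nonneg (by linarith) (sq_nonneg _)

lemma ricianDensity_zero {K : ℝ} (hK : 0 ≤ K) : ricianDensity K 0 = (K + 1) / π * exp (-K) := by
  rw [ricianDensity, zero_sub, norm_neg, Complex.norm_real, norm_of_nonneg (sqrt_nonneg _),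
    sq_sqrt (by positivity)]
  field_simp

/-- exact `SNR⁻¹` decay of the pairwise error probability associated
with the non-removable singular fade states, equations (9)–(10) of the paper:
`lim_{ρ→∞} ρ ∫_ℂ Q(√ρ |Δb| |h| / √2) f_K(h) dh = (K+1) e^{−K}/|Δb|²`. -/
theorem nonremovable_pairwise_error_snr_inv_limit
    (K : ℝ) (hK : 0 ≤ K) (Δb : ℂ) (hΔb : Δb ≠ 0) :
    Tendsto (fun ρ : ℝ =>
        ρ * ∫ h : ℂ,
          gaussianQ (Real.sqrt ρ * ‖Δb‖ * ‖h‖ / Real.sqrt 2) *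
            ricianDensity K h)
      atTop
      (nhds ((K + 1) * Real.exp (-K) / (‖Δb‖) ^ 2)) := by
  have hΔb_pos : 0 < ‖Δb‖ := norm_pos_iff.2 hΔb
  set c := ‖Δb‖ / √2
  have hc : 0 < c := by positivity
  have hlim := ((tendsto_pow_mul_integral_comp_smul_mul volume integrable_gaussianQ_norm
    (continuous_ricianDensity K) (norm_ricianDensity_le (by linarith))).comp
    (tendsto_sqrt_atTop.atTop_mul_const hc)).const_mul (c ^ 2)⁻¹
  have hvalue : (c ^ 2)⁻¹ * (π / 2 * ((K + 1) / π * exp (-K))) =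
      (K + 1) * exp (-K) / ‖Δb‖ ^ 2 := by
    simp only [c, div_pow, sq_sqrt zero_le_two]
    field_simp
  rw [Complex.finrank_real_complex, integral_gaussianQ_norm, ricianDensity_zero hK, hvalue] at hlim
  refine hlim.congr' ?_
  filter_upwards [eventually_ge_atTop 0] with ρ hρ
  have harg : ∀ h : ℂ, √ρ * c * ‖h‖ = √ρ * ‖Δb‖ * ‖h‖ / √2 := fun h => by ring
  simp only [Function.comp_apply, norm_smul, norm_of_nonneg (mul_nonneg (sqrt_nonneg ρ) hc.le),
    harg]
  rw [mul_pow, sq_sqrt hρ, mul_comm ρ, mul_assoc, inv_mul_cancel_left₀ (by positivity)]
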